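/- (Commutative case of Proposition 1.7, 2 ≤ p < ∞.) Let (X, μ) be a σ-finite measure space, 2 ≤ p < ∞, and let T : L^p(X, μ) → L^p(X, μ) be a linear isometry. Then for every N ∈ ℕ and every finite sequence x_1, …, x_N ∈ L^p(X, μ): ‖ ( ∑_{n=1}^{N} |T x_n|^2 )^{1/2} ‖_{L^p(X,μ)} = ‖ ( ∑_{n=1}^{N} |x_n|^2 )^{1/2} ‖_{L^p(X,μ)}. That is, T extends to an isometry of L^p(X; ℓ^2). -/

import Mathlib

/-!
For `a ∈ ℂ^ι`, the unitary invariance of Lebesgue measure on the unit ball `B` gives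
`∫_B |⟪z, a⟫|^p dz = κ ‖a‖^p` with `0 < κ < ∞`. Taking `a = (x_n(ω))_n` and integrating over `X`,
`κ ‖(∑ |x_n|²)^{1/2}‖_p^p = ∫_B ‖∑ conj(z_n) x_n‖_p^p dz`, and the right-hand side does not change
when every `x_n` is replaced by `T x_n`, because `T` is a linear isometry.
-/

open MeasureTheory Finset ENNReal
open Metric
open scoped InnerProductSpace ComplexConjugate

section UnitaryInvariance

variable {ι : Type*} [Fintype ι] [DecidableEq ι]

theorem exists_linearIsometryEquiv_apply_eq_norm_smul_single (a : EuclideanSpace ℂ ι) (i : ι) :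
    ∃ U : EuclideanSpace ℂ ι ≃ₗᵢ[ℂ] EuclideanSpace ℂ ι,
      U a = (‖a‖ : ℂ) • EuclideanSpace.single i (1 : ℂ) := by
  rcases eq_or_ne a 0 with rfl | ha
  · exact ⟨LinearIsometryEquiv.refl ℂ _, by simp⟩
  have hunit : Orthonormal ℂ (({i} : Set ι).domRestrict fun _ => (‖a‖ : ℂ)⁻¹ • a) := by
    rw [orthonormal_subsingleton_iff]
    simp [norm_smul, ha]
  obtain ⟨b, hb⟩ := hunit.exists_orthonormalBasis_extension_of_card_eq (by simp)
  have hab : a = (‖a‖ : ℂ) • b i := by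
    rw [hb i rfl, smul_smul, mul_inv_cancel₀ (by simpa using ha), one_smul]
  refine ⟨b.repr, ?_⟩
  nth_rw 1 [hab]
  rw [LinearIsometryEquiv.map_smul, b.repr_self]

variable {ν : Measure (EuclideanSpace ℂ ι)}

theorem lintegral_enorm_inner_rpow_eq
    (hν : ∀ U : EuclideanSpace ℂ ι ≃ₗᵢ[ℂ] EuclideanSpace ℂ ι, MeasurePreserving U ν ν)
    {q : ℝ} (hq : 0 ≤ q) (a : EuclideanSpace ℂ ι) (i : ι) :
    ∫⁻ z, ‖⟪z, a⟫_ℂ‖ₑ ^ q ∂ν = ‖a‖ₑ ^ q * ∫⁻ z, ‖z i‖ₑ ^ q ∂ν := by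
  obtain ⟨U, hU⟩ := exists_linearIsometryEquiv_apply_eq_norm_smul_single a i
  have hinner (z : EuclideanSpace ℂ ι) : ‖⟪z, a⟫_ℂ‖ₑ ^ q = ‖a‖ₑ ^ q * ‖U z i‖ₑ ^ q := by
    rw [← U.inner_map_map, hU, inner_smul_right, EuclideanSpace.inner_single_right, enorm_mul,
      enorm_mul, ENNReal.mul_rpow_of_nonneg _ _ hq]
    simp [← ofReal_norm]
  simp_rw [hinner]
  rw [lintegral_const_mul' _ _ (by simp [hq]),
    (hν U).lintegral_comp_emb U.toHomeomorph.measurableEmbedding (fun z => ‖z i‖ₑ ^ q)]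

end UnitaryInvariance

section UnitBall

variable {ι : Type*} [Fintype ι]

theorem measurePreserving_restrict_ball_of_linearIsometryEquiv
    (U : EuclideanSpace ℂ ι ≃ₗᵢ[ℂ] EuclideanSpace ℂ ι) (r : ℝ) :
    MeasurePreserving U (volume.restrict (ball 0 r)) (volume.restrict (ball 0 r)) := by
  let UR : EuclideanSpace ℂ ι ≃ₗᵢ[ℝ] EuclideanSpace ℂ ι :=
    ⟨U.toLinearEquiv.restrictScalars ℝ, U.norm_map⟩
  have := UR.measurePreserving.restrict_preimage_emb UR.toHomeomorph.measurableEmbedding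
    (ball 0 r)
  rwa [UR.preimage_ball, map_zero] at this

theorem setLIntegral_ball_enorm_apply_rpow_ne_top {q : ℝ} (hq : 0 ≤ q) (i : ι) :
    ∫⁻ z in ball (0 : EuclideanSpace ℂ ι) 1, ‖z i‖ₑ ^ q ≠ ∞ := by
  have hball : volume (ball (0 : EuclideanSpace ℂ ι) 1) ≠ ∞ := measure_ball_lt_top.ne
  refine ne_top_of_le_ne_top hball ?_
  calc ∫⁻ z in ball (0 : EuclideanSpace ℂ ι) 1, ‖z i‖ₑ ^ q
      ≤ ∫⁻ _ in ball (0 : EuclideanSpace ℂ ι) 1, 1 := by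
        refine setLIntegral_mono' measurableSet_ball fun z hz => rpow_le_one ?_ hq
        have hz1 : ‖z‖ₑ ≤ 1 := by simpa [← ofReal_norm] using (mem_ball_zero_iff.1 hz).le
        exact (PiLp.enorm_apply_le z i).trans hz1
    _ = volume (ball (0 : EuclideanSpace ℂ ι) 1) := setLIntegral_one _

theorem setLIntegral_ball_enorm_apply_rpow_ne_zero {q : ℝ} (i : ι) :
    ∫⁻ z in ball (0 : EuclideanSpace ℂ ι) 1, ‖z i‖ₑ ^ q ≠ 0 := by
  classical
  refine (setLIntegral_pos_iff (by fun_prop)).2 ?_ |>.ne'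
  have hopen : IsOpen ({z : EuclideanSpace ℂ ι | z i ≠ 0} ∩ ball 0 1) :=
    (isOpen_ne_fun (by fun_prop) continuous_const).inter isOpen_ball
  refine (hopen.measure_pos volume ⟨EuclideanSpace.single i (1 / 2 : ℂ), ?_, ?_⟩).trans_le
    (measure_mono (Set.inter_subset_inter_left _ fun z hz => ?_))
  · simp
  · simp [PiLp.norm_single]; norm_num
  · simp_all

end UnitBall

section LpAveraging

variable {X : Type*} [MeasurableSpace X] {μ : Measure X} {p : ℝ≥0∞}

theorem eLpNorm_rpow_toReal_eq_lintegral {E : Type*} [ENorm E] (hp0 : p ≠ 0) (hp : p ≠ ∞)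
    (f : X → E) :
    eLpNorm f p μ ^ p.toReal = ∫⁻ ω, ‖f ω‖ₑ ^ p.toReal ∂μ := by
  rw [eLpNorm_eq_lintegral_rpow_enorm_toReal hp0 hp, one_div,
    ENNReal.rpow_inv_rpow (ENNReal.toReal_pos hp0 hp).ne']

theorem eLpNorm_sqrt_sum_range_sq_eq {𝕜 : Type*} [RCLike 𝕜] (N : ℕ) (g : ℕ → X → 𝕜) :
    eLpNorm (fun ω => (∑ m ∈ range N, ‖g m ω‖ ^ 2 : ℝ) ^ (1 / 2 : ℝ)) p μ
      = eLpNorm (fun ω => WithLp.toLp 2 fun j : Fin N => g j ω) p μ := by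
  refine eLpNorm_congr_norm_ae (ae_of_all _ fun ω => ?_)
  rw [EuclideanSpace.norm_eq, Real.sqrt_eq_rpow, Real.norm_of_nonneg (by positivity)]
  simp [Fin.sum_univ_eq_sum_range (fun m => ‖g m ω‖ ^ 2)]

variable {ι : Type*} [Fintype ι]

theorem MeasureTheory.Lp.coeFn_sum_smul (c : ι → ℂ) (y : ι → Lp ℂ p μ) :
    ⇑(∑ j, c j • y j) =ᵐ[μ] fun ω => ∑ j, c j * y j ω := by
  have hsmul : ∀ᵐ ω ∂μ, ∀ j, (c j • y j) ω = c j * y j ω :=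
    ae_all_iff.2 fun j => Lp.coeFn_smul (c j) (y j)
  filter_upwards [Lp.coeFn_fun_finsetSum univ fun j => c j • y j, hsmul] with ω hsum hsmul
  rw [hsum]
  exact sum_congr rfl fun j _ => hsmul j

theorem lintegral_enorm_sum_smul_rpow_eq [DecidableEq ι] [SFinite μ]
    {ν : Measure (EuclideanSpace ℂ ι)} [SFinite ν]
    (hν : ∀ U : EuclideanSpace ℂ ι ≃ₗᵢ[ℂ] EuclideanSpace ℂ ι, MeasurePreserving U ν ν)
    (hp0 : p ≠ 0) (hp : p ≠ ∞) (y : ι → Lp ℂ p μ) (i : ι) :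
    ∫⁻ z, ‖∑ j, conj (z j) • y j‖ₑ ^ p.toReal ∂ν
      = (∫⁻ z, ‖z i‖ₑ ^ p.toReal ∂ν)
        * eLpNorm (fun ω => WithLp.toLp 2 fun j => y j ω) p μ ^ p.toReal := by
  set Y : X → EuclideanSpace ℂ ι := fun ω => WithLp.toLp 2 fun j => y j ω
  have hY : Measurable Y := (WithLp.measurable_toLp 2 _).comp
    (measurable_pi_lambda _ fun j => (Lp.stronglyMeasurable (y j)).measurable)
  have hinner (z : EuclideanSpace ℂ ι) :
      ‖∑ j, conj (z j) • y j‖ₑ ^ p.toReal = ∫⁻ ω, ‖⟪z, Y ω⟫_ℂ‖ₑ ^ p.toReal ∂μ := by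
    rw [Lp.enorm_def, eLpNorm_rpow_toReal_eq_lintegral hp0 hp]
    refine lintegral_congr_ae ?_
    filter_upwards [Lp.coeFn_sum_smul (fun j => conj (z j)) y] with ω hω
    rw [hω, PiLp.inner_apply]
    simp only [Y, RCLike.inner_apply, mul_comm]
  have hmeas : Measurable (Function.uncurry fun z ω => ‖⟪z, Y ω⟫_ℂ‖ₑ ^ p.toReal) :=
    (measurable_fst.inner (hY.comp measurable_snd)).enorm.pow_const _
  simp_rw [hinner]
  rw [lintegral_lintegral_swap hmeas.aemeasurable, eLpNorm_rpow_toReal_eq_lintegral hp0 hp,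
    mul_comm, ← lintegral_mul_const'' _ (hY.enorm.pow_const _).aemeasurable]
  simp_rw [lintegral_enorm_inner_rpow_eq hν ENNReal.toReal_nonneg _ i]

theorem eLpNorm_toLp_comp_eq_of_isometry [Fact (1 ≤ p)] [SFinite μ] (hp : p ≠ ∞)
    {T : Lp ℂ p μ →L[ℂ] Lp ℂ p μ} (hT : ∀ f, ‖T f‖ = ‖f‖) (y : ι → Lp ℂ p μ) :
    eLpNorm (fun ω => WithLp.toLp 2 fun j => T (y j) ω) p μ
      = eLpNorm (fun ω => WithLp.toLp 2 fun j => y j ω) p μ := by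
  classical
  cases isEmpty_or_nonempty ι
  · congr 1
    ext ω j
    exact isEmptyElim j
  obtain ⟨i⟩ := ‹Nonempty ι›
  have hp0 : p ≠ 0 := (zero_lt_one.trans_le (Fact.out : 1 ≤ p)).ne'
  have hTsum (z : EuclideanSpace ℂ ι) :
      ‖∑ j, conj (z j) • T (y j)‖ₑ = ‖∑ j, conj (z j) • y j‖ₑ := by
    simp only [← ofReal_norm, ← map_smul, ← map_sum, hT]
  have hball (U : EuclideanSpace ℂ ι ≃ₗᵢ[ℂ] EuclideanSpace ℂ ι) :=
    measurePreserving_restrict_ball_of_linearIsometryEquiv U 1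
  have hpow : eLpNorm (fun ω => WithLp.toLp 2 fun j => T (y j) ω) p μ ^ p.toReal
      = eLpNorm (fun ω => WithLp.toLp 2 fun j => y j ω) p μ ^ p.toReal := by
    rw [← ENNReal.mul_right_inj (setLIntegral_ball_enorm_apply_rpow_ne_zero i)
      (setLIntegral_ball_enorm_apply_rpow_ne_top toReal_nonneg i),
      ← lintegral_enorm_sum_smul_rpow_eq hball hp0 hp,
      ← lintegral_enorm_sum_smul_rpow_eq hball hp0 hp]
    simp_rw [hTsum]
  exact ENNReal.rpow_left_injective (ENNReal.toReal_pos hp0 hp).ne' hpow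

end LpAveraging

theorem isometry_extension_square_function_general
    {X : Type*} [MeasurableSpace X] (μ : Measure X) [SigmaFinite μ]
    (p : ℝ≥0∞) [Fact (1 ≤ p)] (hp' : p ≠ ∞)
    (T : Lp ℂ p μ →L[ℂ] Lp ℂ p μ) (hT : ∀ x : Lp ℂ p μ, ‖T x‖ = ‖x‖)
    (N : ℕ) (x : ℕ → Lp ℂ p μ) :
    eLpNorm (fun ω => (∑ m ∈ Finset.range N, ‖(T (x m)) ω‖ ^ 2 : ℝ) ^ (1 / 2 : ℝ)) p μ
      = eLpNorm (fun ω => (∑ m ∈ Finset.range N, ‖(x m) ω‖ ^ 2 : ℝ) ^ (1 / 2 : ℝ)) p μ := by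
  rw [eLpNorm_sqrt_sum_range_sq_eq, eLpNorm_sqrt_sum_range_sq_eq]
  exact eLpNorm_toLp_comp_eq_of_isometry hp' hT fun j : Fin N => x j

/-- Commutative case of Proposition 1.7 for `2 ≤ p < ∞`: a linear isometry of `L^p`
extends to an isometry of the `ℓ²`-valued space `L^p(X; ℓ²)`. -/
theorem isometry_extension_square_function
    {X : Type*} [MeasurableSpace X] (μ : Measure X) [SigmaFinite μ]
    (p : ℝ≥0∞) [Fact (1 ≤ p)] (hp : 2 ≤ p) (hp' : p ≠ ∞)
    (T : Lp ℂ p μ →L[ℂ] Lp ℂ p μ) (hT : ∀ x : Lp ℂ p μ, ‖T x‖ = ‖x‖)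
    (N : ℕ) (x : ℕ → Lp ℂ p μ) :
    eLpNorm (fun ω => (∑ m ∈ Finset.range N, ‖(T (x m)) ω‖ ^ 2 : ℝ) ^ (1 / 2 : ℝ)) p μ
      = eLpNorm (fun ω => (∑ m ∈ Finset.range N, ‖(x m) ω‖ ^ 2 : ℝ) ^ (1 / 2 : ℝ)) p μ :=
  isometry_extension_square_function_general μ p hp' T hT N x
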